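/- arXiv:1110.1988 — 4 statements merged into one kernel-verified Lean document; each statement's English description precedes it below -/
import Mathlib

section
/- The set S_R(I,J,K) of real I×J×K tensors of rank at most R is not closed (in the Euclidean topology on R^{I×J×K}) for R = 2, provided I,J,K ≥ 2. Equivalently, there exists a sequence of tensors each of rank at most 2 converging to a tensor of rank greater than 2. -/
/-!
The tensor `W = e₁⊗e₀⊗e₀ + e₀⊗e₁⊗e₀ + e₀⊗e₀⊗e₁` is the derivative at `t = 0` of the rank-one
curve `t ↦ (e₀ + t e₁)^{⊗3}`, hence the limit of the difference quotients
`t⁻¹ ((e₀ + t e₁)^{⊗3} - e₀^{⊗3})`, each of rank at most two.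

A rank-two decomposition of the `2 × 2 × 2` corner of `W` would write its slices as
`Wₖ = A diag(c · k) Bᵀ`, so that `det (λ₀ W₀ + λ₁ W₁) = det A det B ∏ᵣ (c r 0 λ₀ + c r 1 λ₁)`.
This determinant is `-λ₀²`, so both linear forms are multiples of `λ₀`, i.e. `c · 1 = 0`;
but then `W₁ = 0`, which it is not.
-/

open Filter Topology

def outer {I J K : ℕ} (a : Fin I → ℝ) (b : Fin J → ℝ) (c : Fin K → ℝ) :
    Fin I → Fin J → Fin K → ℝ := fun i j k => a i * b j * c k

def hasRankLE {I J K : ℕ} (T : Fin I → Fin J → Fin K → ℝ) (R : ℕ) : Prop :=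
  ∃ (a : Fin R → Fin I → ℝ) (b : Fin R → Fin J → ℝ) (c : Fin R → Fin K → ℝ),
    T = ∑ r, outer (a r) (b r) (c r)

section Rank

variable {I J K : ℕ}

lemma hasRankLE_outer_add_outer (x x' : Fin I → ℝ) (y y' : Fin J → ℝ) (z z' : Fin K → ℝ) :
    hasRankLE (outer x y z + outer x' y' z') 2 :=
  ⟨![x, x'], ![y, y'], ![z, z'], by simp [Fin.sum_univ_two]⟩

lemma hasRankLE_smul_outer_sub_outer (t : ℝ) (x x' : Fin I → ℝ) (y y' : Fin J → ℝ)
    (z z' : Fin K → ℝ) : hasRankLE (t • (outer x y z - outer x' y' z')) 2 := by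
  convert hasRankLE_outer_add_outer (t • x) (-(t • x')) y y' z z' using 1
  ext i j k
  simp only [outer, Pi.smul_apply, Pi.sub_apply, Pi.add_apply, Pi.neg_apply, smul_eq_mul]
  ring

lemma hasRankLE.comp {I' J' K' : ℕ} {T : Fin I → Fin J → Fin K → ℝ} {R : ℕ}
    (hT : hasRankLE T R) (f : Fin I' → Fin I) (g : Fin J' → Fin J) (h : Fin K' → Fin K) :
    hasRankLE (fun i j k => T (f i) (g j) (h k)) R := by
  obtain ⟨a, b, c, rfl⟩ := hT
  exact ⟨fun r => a r ∘ f, fun r => b r ∘ g, fun r => c r ∘ h, by ext; simp [outer]⟩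

end Rank

section Tangent

variable {I J K : ℕ} (a₁ b₁ : Fin I → ℝ) (a₂ b₂ : Fin J → ℝ) (a₃ b₃ : Fin K → ℝ)

lemma hasDerivAt_outer_line :
    HasDerivAt (fun t : ℝ => outer (a₁ + t • b₁) (a₂ + t • b₂) (a₃ + t • b₃))
      (outer b₁ a₂ a₃ + outer a₁ b₂ a₃ + outer a₁ a₂ b₃) 0 := by
  refine hasDerivAt_pi.2 fun i => hasDerivAt_pi.2 fun j => hasDerivAt_pi.2 fun k => ?_
  have hline : ∀ (a b : ℝ), HasDerivAt (fun t : ℝ => a + t * b) b 0 := fun a b => by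
    simpa using ((hasDerivAt_id (0 : ℝ)).mul_const b).const_add a
  refine (((hline (a₁ i) (b₁ i)).mul (hline (a₂ j) (b₂ j))).mul
    (hline (a₃ k) (b₃ k))).congr_deriv ?_
  simp only [outer, Pi.add_apply, Pi.mul_apply]
  ring

lemma tendsto_smul_outer_line_sub_outer :
    Tendsto (fun t : ℝ => t⁻¹ • (outer (a₁ + t • b₁) (a₂ + t • b₂) (a₃ + t • b₃) -
        outer a₁ a₂ a₃)) (𝓝[>] 0)
      (𝓝 (outer b₁ a₂ a₃ + outer a₁ b₂ a₃ + outer a₁ a₂ b₃)) := by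
  simpa using (hasDerivAt_outer_line a₁ b₁ a₂ b₂ a₃ b₃).tendsto_slope_zero_right

end Tangent

section WTensor

def unitVec {m : ℕ} (v : ℕ) : Fin m → ℝ := fun i => if (i : ℕ) = v then 1 else 0

def wTensor {I J K : ℕ} : Fin I → Fin J → Fin K → ℝ :=
  outer (unitVec 1) (unitVec 0) (unitVec 0) + outer (unitVec 0) (unitVec 1) (unitVec 0) +
    outer (unitVec 0) (unitVec 0) (unitVec 1)

lemma not_hasRankLE_wTensor_two : ¬ hasRankLE (wTensor : Fin 2 → Fin 2 → Fin 2 → ℝ) 2 := by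
  rintro ⟨a, b, c, h⟩
  have entry : ∀ i j k,
      a 0 i * b 0 j * c 0 k + a 1 i * b 1 j * c 1 k = wTensor (I := 2) (J := 2) (K := 2) i j k :=
    fun i j k => by rw [h]; simp [outer, Fin.sum_univ_two]
  have h000 := entry 0 0 0
  have h001 := entry 0 0 1
  have h010 := entry 0 1 0
  have h011 := entry 0 1 1
  have h100 := entry 1 0 0
  have h101 := entry 1 0 1
  have h110 := entry 1 1 0
  have h111 := entry 1 1 1
  simp only [wTensor, Pi.add_apply, outer, unitVec, Fin.isValue, Fin.coe_ofNat_eq_mod,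
    Nat.zero_mod, Nat.mod_succ, zero_ne_one, one_ne_zero, ↓reduceIte, mul_one, mul_zero, add_zero,
    zero_add] at h000 h001 h010 h011 h100 h101 h110 h111
  set w := (a 0 0 * a 1 1 - a 1 0 * a 0 1) * (b 0 0 * b 1 1 - b 1 0 * b 0 1)
  -- `w = det A det B`; these are the coefficients of `λ₀²`, `λ₁²`, `λ₀λ₁` in
  -- `-λ₀² = det (λ₀ W₀ + λ₁ W₁) = w (c 0 0 λ₀ + c 0 1 λ₁) (c 1 0 λ₀ + c 1 1 λ₁)`.
  have hdet₀₀ : w * (c 0 0 * c 1 0) = -1 := by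
    linear_combination (a 0 1 * b 0 1 * c 0 0 + a 1 1 * b 1 1 * c 1 0) * h000
      - (a 0 1 * b 0 0 * c 0 0 + a 1 1 * b 1 0 * c 1 0) * h010 - h100
  have hdet₁₁ : w * (c 0 1 * c 1 1) = 0 := by
    linear_combination (a 0 1 * b 0 1 * c 0 1 + a 1 1 * b 1 1 * c 1 1) * h001 + h111
      - (a 0 1 * b 0 0 * c 0 1 + a 1 1 * b 1 0 * c 1 1) * h011
  have hdet₀₁ : w * (c 0 0 * c 1 1 + c 1 0 * c 0 1) = 0 := by
    linear_combination (a 0 1 * b 0 1 * c 0 1 + a 1 1 * b 1 1 * c 1 1) * h000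
      + (a 0 0 * b 0 0 * c 0 1 + a 1 0 * b 1 0 * c 1 1) * h110
      - (a 0 1 * b 0 0 * c 0 1 + a 1 1 * b 1 0 * c 1 1) * h010 - h101
      - (a 0 1 * b 0 0 * c 0 0 + a 1 1 * b 1 0 * c 1 0) * h011
  have hc₀₁ : c 0 1 = 0 := pow_eq_zero_iff two_ne_zero |>.1 <| by
    linear_combination c 0 0 ^ 2 * (w * c 1 0 * c 0 1) * hdet₀₁
      - c 0 0 ^ 2 * (w * c 0 0 * c 1 0) * hdet₁₁ - c 0 1 ^ 2 * (w * c 0 0 * c 1 0 - 1) * hdet₀₀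
  have hc₁₁ : c 1 1 = 0 := pow_eq_zero_iff two_ne_zero |>.1 <| by
    linear_combination c 1 0 ^ 2 * (w * c 0 0 * c 1 1) * hdet₀₁
      - c 1 0 ^ 2 * (w * c 0 0 * c 1 0) * hdet₁₁ - c 1 1 ^ 2 * (w * c 0 0 * c 1 0 - 1) * hdet₀₀
  simp [hc₀₁, hc₁₁] at h001

lemma not_hasRankLE_wTensor {I J K : ℕ} (hI : 2 ≤ I) (hJ : 2 ≤ J) (hK : 2 ≤ K) :
    ¬ hasRankLE (wTensor : Fin I → Fin J → Fin K → ℝ) 2 := fun h => by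
  have hcorner := h.comp (Fin.castLE hI) (Fin.castLE hJ) (Fin.castLE hK)
  have hrestrict : (fun i j k => wTensor (Fin.castLE hI i) (Fin.castLE hJ j) (Fin.castLE hK k)) =
      (wTensor : Fin 2 → Fin 2 → Fin 2 → ℝ) := by
    ext i j k
    simp [wTensor, outer, unitVec]
  exact not_hasRankLE_wTensor_two (hrestrict ▸ hcorner)

end WTensor

theorem stmt0 (I J K : ℕ) (hI : 2 ≤ I) (hJ : 2 ≤ J) (hK : 2 ≤ K) :
    (¬ IsClosed {T : Fin I → Fin J → Fin K → ℝ | hasRankLE T 2}) ∧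
    ∃ (Y : ℕ → Fin I → Fin J → Fin K → ℝ) (X : Fin I → Fin J → Fin K → ℝ),
      Tendsto Y atTop (𝓝 X) ∧ (∀ n, hasRankLE (Y n) 2) ∧ ¬ hasRankLE X 2 := by
  have hsecant := tendsto_smul_outer_line_sub_outer (I := I) (J := J) (K := K)
    (unitVec 0) (unitVec 1) (unitVec 0) (unitVec 1) (unitVec 0) (unitVec 1)
  have hstep : Tendsto (fun n : ℕ => 1 / ((n : ℝ) + 1)) atTop (𝓝[>] 0) :=
    tendsto_nhdsWithin_iff.2
      ⟨tendsto_one_div_add_atTop_nhds_zero_nat, .of_forall fun n => Set.mem_Ioi.2 (by positivity)⟩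
  have hY := hsecant.comp hstep
  have hW := not_hasRankLE_wTensor hI hJ hK
  refine ⟨fun hclosed => hW (hclosed.mem_of_tendsto hY (.of_forall fun n => ?_)), _, _, hY,
    fun n => ?_, hW⟩ <;> exact hasRankLE_smul_outer_sub_outer _ _ _ _ _ _ _
end

section
/- Every real 2×2×2 tensor has rank at most 3. -/
/-!
Let `A = T 0` and `B = T 1` be the two slices of `T`. For a rank-one matrix `P = p qᵀ`,
`det (M - v P) = det M - v · qᵀ (adj M) p` is affine in `v`, so there are scalars `v₀, v₁` making
both `A - v₀ P` and `B - v₁ P` singular, hence rank one, as soon as `qᵀ (adj M) p ≠ 0` for each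
invertible slice `M`. Fixing `p = e₀`, this only asks for `q` not orthogonal to two given nonzero
vectors `a, b`, and `q = a` or `q = a + b` does it. Then
`T = e₀ ⊗ (A - v₀ P) + e₁ ⊗ (B - v₁ P) + (v₀, v₁) ⊗ p ⊗ q`.
-/

open Filter Topology

noncomputable def tensorRank {I J K : ℕ} (T : Fin I → Fin J → Fin K → ℝ) : ℕ :=
  sInf {R | hasRankLE T R}

open Matrix

namespace Matrix

theorem det_sub_smul_vecMulVec_fin_two {R : Type*} [CommRing R] (M : Matrix (Fin 2) (Fin 2) R)
    (v : R) (p q : Fin 2 → R) :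
    (M - v • vecMulVec p q).det = M.det - v * (q ⬝ᵥ (M.adjugate *ᵥ p)) := by
  simp only [det_fin_two, adjugate_fin_two, sub_apply, smul_apply, vecMulVec_apply, smul_eq_mul,
    dotProduct, mulVec, Fin.sum_univ_two, of_apply, cons_val_zero, cons_val_one]
  ring

theorem adjugate_mulVec_ne_zero {n K : Type*} [Fintype n] [DecidableEq n] [Field K]
    {M : Matrix n n K} (hM : M.det ≠ 0) {p : n → K} (hp : p ≠ 0) : M.adjugate *ᵥ p ≠ 0 := by
  intro h
  have : M *ᵥ (M.adjugate *ᵥ p) = M.det • p := by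
    rw [mulVec_mulVec, mul_adjugate, smul_mulVec, one_mulVec]
  rw [h, mulVec_zero] at this
  exact hp ((smul_eq_zero.mp this.symm).resolve_left hM)

theorem exists_eq_vecMulVec_of_det_eq_zero {K : Type*} [Field K] {M : Matrix (Fin 2) (Fin 2) K}
    (h : M.det = 0) : ∃ x y : Fin 2 → K, M = vecMulVec x y := by
  rw [det_fin_two] at h
  by_cases h00 : M 0 0 = 0
  · rcases mul_eq_zero.mp (show M 0 1 * M 1 0 = 0 by simpa [h00] using h.symm) with h01 | h10
    · exact ⟨![0, 1], M 1, by ext i j; fin_cases i <;> fin_cases j <;> simp [vecMulVec, h00, h01]⟩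
    · exact ⟨![M 0 1, M 1 1], ![0, 1],
        by ext i j; fin_cases i <;> fin_cases j <;> simp [vecMulVec, h00, h10]⟩
  · refine ⟨![M 0 0, M 1 0], ![1, M 0 1 / M 0 0], ?_⟩
    ext i j; fin_cases i <;> fin_cases j <;> simp [vecMulVec] <;> field_simp
    linear_combination h

end Matrix

theorem exists_dotProduct_ne_zero {n K : Type*} [Fintype n] [Field K] [LinearOrder K]
    [IsStrictOrderedRing K] (a b : n → K) :
    ∃ q : n → K, (a ≠ 0 → q ⬝ᵥ a ≠ 0) ∧ (b ≠ 0 → q ⬝ᵥ b ≠ 0) := by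
  by_cases hab : a ⬝ᵥ b = 0
  · refine ⟨a + b, fun ha => ?_, fun hb => ?_⟩
    · rwa [add_dotProduct, dotProduct_comm b, hab, add_zero, Ne, dotProduct_self_eq_zero]
    · rwa [add_dotProduct, hab, zero_add, Ne, dotProduct_self_eq_zero]
  · exact ⟨a, fun ha => by rwa [Ne, dotProduct_self_eq_zero], fun _ => hab⟩

theorem exists_det_sub_smul_vecMulVec_eq_zero {K : Type*} [Field K] [LinearOrder K]
    [IsStrictOrderedRing K] (M : Fin 2 → Matrix (Fin 2) (Fin 2) K) :
    ∃ (p q v : Fin 2 → K), ∀ i, (M i - v i • vecMulVec p q).det = 0 := by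
  set p : Fin 2 → K := Pi.single 0 1
  have hp : p ≠ 0 := Pi.single_ne_zero_iff.mpr one_ne_zero
  obtain ⟨q, hq⟩ := exists_dotProduct_ne_zero ((M 0).adjugate *ᵥ p) ((M 1).adjugate *ᵥ p)
  have hslope : ∀ i, (M i).det ≠ 0 → q ⬝ᵥ ((M i).adjugate *ᵥ p) ≠ 0 := by
    rw [Fin.forall_fin_two]
    exact ⟨fun h => hq.1 (adjugate_mulVec_ne_zero h hp),
      fun h => hq.2 (adjugate_mulVec_ne_zero h hp)⟩
  -- When the slope vanishes so does `det (M i)`, and `v i = det / 0 = 0` still works.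
  refine ⟨p, q, fun i => (M i).det / (q ⬝ᵥ ((M i).adjugate *ᵥ p)), fun i => ?_⟩
  rw [det_sub_smul_vecMulVec_fin_two]
  by_cases hf : q ⬝ᵥ ((M i).adjugate *ᵥ p) = 0
  · rw [hf, mul_zero, sub_zero]
    by_contra hdet
    exact hslope i hdet hf
  · field_simp
    ring

theorem hasRankLE_three_of_sub_smul_eq_vecMulVec {J K : ℕ} (T : Fin 2 → Matrix (Fin J) (Fin K) ℝ)
    (p : Fin J → ℝ) (q : Fin K → ℝ) (v : Fin 2 → ℝ) (x : Fin 2 → Fin J → ℝ)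
    (y : Fin 2 → Fin K → ℝ) (h : ∀ i, T i - v i • vecMulVec p q = vecMulVec (x i) (y i)) :
    hasRankLE T 3 := by
  refine ⟨![Pi.single 0 1, Pi.single 1 1, v], ![x 0, x 1, p], ![y 0, y 1, q], ?_⟩
  funext i j k
  have := congrFun (congrFun (h i) j) k
  simp only [Matrix.sub_apply, Matrix.smul_apply, vecMulVec_apply, smul_eq_mul] at this
  fin_cases i <;> simp [outer, Fin.sum_univ_three] at this ⊢ <;> linear_combination this

theorem stmt1 (T : Fin 2 → Fin 2 → Fin 2 → ℝ) : hasRankLE T 3 := by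
  obtain ⟨p, q, v, hv⟩ := exists_det_sub_smul_vecMulVec_eq_zero T
  choose x y hxy using fun i => exists_eq_vecMulVec_of_det_eq_zero (hv i)
  exact hasRankLE_three_of_sub_smul_eq_vecMulVec T p q v x y hxy
end

section
/- Every real 3×2×2 tensor has rank at most 3. -/
open Filter Topology

/-!
The three slices `T i` lie in the 4-dimensional space of `2 × 2` matrices, so some nonzero
functional `M ↦ ∑ j k, Φ j k * M j k` annihilates them all. Every such hyperplane is spanned by
three rank-one matrices `b r ⊗ c r`, and expanding each slice in them writes `T` as the sum of
three outer products.
-/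

open Submodule

variable {I J K R : ℕ}

theorem hasRankLE_of_forall_mem_span (T : Fin I → Fin J → Fin K → ℝ)
    (b : Fin R → Fin J → ℝ) (c : Fin R → Fin K → ℝ)
    (hT : ∀ i, T i ∈ span ℝ (Set.range fun r j k => b r j * c r k)) :
    hasRankLE T R := by
  choose a ha using fun i => (mem_span_range_iff_exists_fun ℝ).1 (hT i)
  refine ⟨fun r i => a i r, b, c, ?_⟩
  funext i j k
  simp [outer, ← ha i, Finset.sum_apply, mul_assoc]

theorem hasRankLE_of_reindex {J' K' : ℕ} (T : Fin I → Fin J → Fin K → ℝ)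
    (σ : Fin J' ≃ Fin J) (τ : Fin K' ≃ Fin K)
    (h : hasRankLE (fun i j k => T i (σ j) (τ k)) R) : hasRankLE T R := by
  obtain ⟨a, b, c, h⟩ := h
  refine ⟨a, fun r => b r ∘ σ.symm, fun r => c r ∘ τ.symm, ?_⟩
  funext i j k
  simpa [outer, Finset.sum_apply] using
    congr_fun (congr_fun (congr_fun h i) (σ.symm j)) (τ.symm k)

theorem exists_ne_zero_forall_sum_mul_eq_zero (T : Fin I → Fin J → Fin K → ℝ) (h : I < J * K) :
    ∃ Φ : Fin J → Fin K → ℝ, Φ ≠ 0 ∧ ∀ i, ∑ j, ∑ k, Φ j k * T i j k = 0 := by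
  let L : (Fin J → Fin K → ℝ) →ₗ[ℝ] Fin I → ℝ :=
    { toFun := fun Φ i => ∑ j, ∑ k, Φ j k * T i j k
      map_add' := fun Φ Ψ => by ext; simp [add_mul, Finset.sum_add_distrib]
      map_smul' := fun t Φ => by ext; simp [Finset.mul_sum, mul_assoc] }
  have hL : LinearMap.ker L ≠ ⊥ :=
    L.ker_ne_bot_of_finrank_lt (by simpa [Module.finrank_pi_fintype] using h)
  obtain ⟨Φ, hΦ, hΦ0⟩ := exists_mem_ne_zero_of_ne_bot hL
  exact ⟨Φ, hΦ0, fun i => congr_fun (LinearMap.mem_ker.1 hΦ) i⟩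

/-- With `Φ = [[1, q], [r, s]]`, a matrix of the hyperplane is determined by its entries `(0,1)`,
`(1,0)`, `(1,1)`, in which the rank-one matrices `e₀ ⊗ (q, -1)`, `(r, -1) ⊗ e₀` and
`(1 - r, 1) ⊗ (-(1 - r) q - s, 1)` of the hyperplane are triangular. -/
theorem exists_rankOne_span_of_pivot_eq_one (Φ : Fin 2 → Fin 2 → ℝ) (hΦ : Φ 0 0 = 1) :
    ∃ b c : Fin 3 → Fin 2 → ℝ, ∀ M : Fin 2 → Fin 2 → ℝ, ∑ j, ∑ k, Φ j k * M j k = 0 →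
      M ∈ span ℝ (Set.range fun r j k => b r j * c r k) := by
  refine ⟨![![1, 0], ![Φ 1 0, -1], ![1 - Φ 1 0, 1]],
    ![![Φ 0 1, -1], ![1, 0], ![-((1 - Φ 1 0) * Φ 0 1 + Φ 1 1), 1]], fun M hM => ?_⟩
  have hM00 : M 0 0 = -(Φ 0 1 * M 0 1 + Φ 1 0 * M 1 0 + Φ 1 1 * M 1 1) := by
    simp only [Fin.sum_univ_two, hΦ] at hM
    linarith
  refine (mem_span_range_iff_exists_fun ℝ).2 ⟨![(1 - Φ 1 0) * M 1 1 - M 0 1,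
    -M 1 0 - ((1 - Φ 1 0) * Φ 0 1 + Φ 1 1) * M 1 1, M 1 1], ?_⟩
  funext j k
  fin_cases j <;> fin_cases k <;> simp [Fin.sum_univ_three, hM00] <;> ring

theorem hasRankLE_three_of_forall_sum_mul_eq_zero (T : Fin I → Fin 2 → Fin 2 → ℝ)
    (Φ : Fin 2 → Fin 2 → ℝ) (hΦ : Φ ≠ 0) (hT : ∀ i, ∑ j, ∑ k, Φ j k * T i j k = 0) :
    hasRankLE T 3 := by
  obtain ⟨j₀, k₀, h₀⟩ : ∃ j k, Φ j k ≠ 0 := by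
    by_contra! h
    exact hΦ (funext fun j => funext (h j))
  let σ := Equiv.swap 0 j₀
  let τ := Equiv.swap 0 k₀
  obtain ⟨b, c, hbc⟩ := exists_rankOne_span_of_pivot_eq_one (fun j k => Φ (σ j) (τ k) / Φ j₀ k₀)
    (by simp [σ, τ, h₀])
  refine hasRankLE_of_reindex T σ τ (hasRankLE_of_forall_mem_span _ b c fun i => hbc _ ?_)
  simp only [div_mul_eq_mul_div, ← Finset.sum_div]
  rw [Equiv.sum_comp σ fun j => ∑ k, Φ j (τ k) * T i j (τ k)]
  simp only [fun j => Equiv.sum_comp τ fun k => Φ j k * T i j k, hT, zero_div]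

theorem stmt2 (T : Fin 3 → Fin 2 → Fin 2 → ℝ) : hasRankLE T 3 := by
  obtain ⟨Φ, hΦ, hT⟩ := exists_ne_zero_forall_sum_mul_eq_zero T (by norm_num)
  exact hasRankLE_three_of_forall_sum_mul_eq_zero T Φ hΦ hT
end

section
/- Let c ∈ R^K be nonzero, a_1, a_2 ∈ R^I and b_1, b_2 ∈ R^J with {a_1, a_2} linearly independent and {b_1, b_2} linearly independent, let A = [a_1 a_2], B = [b_1 b_2], and let Ã = A Q = [ã_1 ã_2], B̃ = B Q^{-T} = [b̃_1 b̃_2] for an invertible Q. Let X = [x_1 x_2 x_3 x_4] ∈ R^{I×4}, Y = [y_1 y_2 y_3 y_4] ∈ R^{J×4}, Z = [z_1 z_2 z_3 z_4] ∈ R^{K×4} be such that rank[A | Ã | X] = 6, rank[B | B̃ | Y] = 6 and rank[c | Z] = 5. Define X_tensor = a_1∘b_1∘z_1 + a_1∘y_1∘c + x_1∘b_1∘c + a_2∘b_2∘z_2 + a_2∘y_2∘c + x_2∘b_2∘c − ã_1∘b̃_1∘z_3 − ã_1∘y_3∘c − x_3∘b̃_1∘c − ã_2∘b̃_2∘z_4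 − ã_2∘y_4∘c − x_4∘b̃_2∘c. Then rank(X_tensor) ≥ 6. -/
open Matrix

/-! ### Auxiliary lemmas -/

private lemma inner_eq_dot (n : ℕ) (x y : Fin n → ℝ) :
    (@inner ℝ (EuclideanSpace ℝ (Fin n)) _ (WithLp.toLp 2 x) (WithLp.toLp 2 y)) = x ⬝ᵥ y := by
  simp [PiLp.inner_apply, dotProduct, mul_comm]

lemma sep' {n m : ℕ} (v : Fin m → (Fin n → ℝ)) (c : Fin n → ℝ)
    (h : ∀ φ : Fin n → ℝ, (∀ i, v i ⬝ᵥ φ = 0) → c ⬝ᵥ φ = 0) :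
    ∃ t : Fin m → ℝ, c = ∑ i, t i • v i := by
  classical
  let E := EuclideanSpace ℝ (Fin n)
  let S : Submodule ℝ E := Submodule.span ℝ (Set.range (fun i => (WithLp.toLp 2 (v i) : E)))
  have hcS : (WithLp.toLp 2 c : E) ∈ S := by
    by_contra hcS
    set p : E := (S.orthogonalProjection (WithLp.toLp 2 c) : E) with hp'
    set φ : E := (WithLp.toLp 2 c : E) - p with hφ
    have hφS : φ ∈ Sᗮ := Submodule.sub_starProjection_mem_orthogonal (K := S) _
    have hkill : ∀ i, v i ⬝ᵥ φ.ofLp = 0 := by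
      intro i
      rw [← inner_eq_dot]
      exact (Submodule.mem_orthogonal S φ).mp hφS _
        (Submodule.subset_span (Set.mem_range_self i))
    have hc0 : c ⬝ᵥ φ.ofLp = 0 := h φ.ofLp hkill
    have hpφ : p.ofLp ⬝ᵥ φ.ofLp = 0 := by
      rw [← inner_eq_dot]
      exact (Submodule.mem_orthogonal S φ).mp hφS _ (S.orthogonalProjection _).2
    have hφφ : (φ.ofLp ⬝ᵥ φ.ofLp) = 0 := by
      have h2 : (c - p.ofLp) ⬝ᵥ φ.ofLp = 0 := by
        rw [sub_dotProduct, hc0, hpφ, sub_zero]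
      have h3 : c - p.ofLp = φ.ofLp := by rw [hφ]; rfl
      rwa [h3] at h2
    have hφ0 : φ = 0 := by
      have : (@inner ℝ E _ φ φ) = 0 := by rw [← inner_eq_dot] at hφφ; exact hφφ
      exact inner_self_eq_zero.mp this
    apply hcS
    have hc : (WithLp.toLp 2 c : E) = p := by
      have := sub_eq_zero.mp (hφ ▸ hφ0)
      exact this
    rw [hc]
    exact (S.orthogonalProjection _).2
  obtain ⟨t, ht⟩ := (Submodule.mem_span_range_iff_exists_fun ℝ).mp hcS
  refine ⟨t, ?_⟩
  have := congrArg WithLp.ofLp ht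
  simp only [WithLp.ofLp_sum, WithLp.ofLp_smul] at this
  exact this.symm

lemma dot_sum {n m : ℕ} (u : Fin n → ℝ) (f : Fin m → Fin n → ℝ) :
    u ⬝ᵥ (∑ i, f i) = ∑ i, u ⬝ᵥ f i := by
  simp only [dotProduct, Finset.sum_apply, Finset.mul_sum]
  rw [Finset.sum_comm]

lemma sum_dot {n m : ℕ} (u : Fin n → ℝ) (f : Fin m → Fin n → ℝ) :
    (∑ i, f i) ⬝ᵥ u = ∑ i, f i ⬝ᵥ u := by
  simp only [dotProduct, Finset.sum_apply, Finset.sum_mul]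
  rw [Finset.sum_comm]

/-- For a linearly independent family, any prescribed pairing values are attained. -/
lemma exists_dual {n m : ℕ} (v : Fin m → (Fin n → ℝ)) (hv : LinearIndependent ℝ v)
    (t : Fin m → ℝ) : ∃ φ : Fin n → ℝ, ∀ i, v i ⬝ᵥ φ = t i := by
  classical
  have step : ∀ i : Fin m, ∃ φ : Fin n → ℝ, (∀ j, j ≠ i → v j ⬝ᵥ φ = 0) ∧ v i ⬝ᵥ φ ≠ 0 := by
    intro i
    by_contra hno
    push_neg at hno
    have h : ∀ φ : Fin n → ℝ, (∀ j, (if j = i then (0:Fin n → ℝ) else v j) ⬝ᵥ φ = 0) →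
        v i ⬝ᵥ φ = 0 := by
      intro φ hφ
      apply hno φ
      intro j hj
      have := hφ j
      simpa [hj] using this
    obtain ⟨s, hs⟩ := sep' (fun j => if j = i then (0:Fin n → ℝ) else v j) (v i) h
    have hvi : v i = ∑ j ∈ Finset.univ.erase i, s j • v j := by
      rw [hs, ← Finset.add_sum_erase _ _ (Finset.mem_univ i), if_pos rfl, smul_zero, zero_add]
      apply Finset.sum_congr rfl
      intro j hj
      rw [if_neg (Finset.ne_of_mem_erase hj)]
    set g : Fin m → ℝ := fun j => if j = i then (-1:ℝ) else s j with hg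
    have hzero : ∑ j, g j • v j = 0 := by
      rw [← Finset.add_sum_erase _ _ (Finset.mem_univ i)]
      have h1 : g i • v i = -v i := by simp [hg]
      have h2 : ∑ j ∈ Finset.univ.erase i, g j • v j = ∑ j ∈ Finset.univ.erase i, s j • v j := by
        apply Finset.sum_congr rfl
        intro j hj
        rw [hg]; simp only [if_neg (Finset.ne_of_mem_erase hj)]
      rw [h1, h2, ← hvi]
      exact neg_add_cancel (v i)
    have := Fintype.linearIndependent_iff.mp hv g hzero i
    rw [hg] at this
    simp at this
  choose ψ hψ0 hψ1 using step
  refine ⟨∑ i, (t i / (v i ⬝ᵥ ψ i)) • ψ i, ?_⟩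
  intro j
  rw [dot_sum]
  rw [Finset.sum_eq_single j]
  · rw [dotProduct_smul, smul_eq_mul, div_mul_cancel₀ _ (hψ1 j)]
  · intro i _ hij
    rw [dotProduct_smul, hψ0 i j hij.symm, smul_zero]
  · intro hj; exact absurd (Finset.mem_univ j) hj

lemma hasRankLE_mono {I J K : ℕ} {T : Fin I → Fin J → Fin K → ℝ} {R R' : ℕ}
    (h : hasRankLE T R) (hRR : R ≤ R') : hasRankLE T R' := by
  classical
  obtain ⟨u, v, w, hT⟩ := h
  refine ⟨fun r => if hr : (r:ℕ) < R then u ⟨r, hr⟩ else 0,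
          fun r => if hr : (r:ℕ) < R then v ⟨r, hr⟩ else 0,
          fun r => if hr : (r:ℕ) < R then w ⟨r, hr⟩ else 0, ?_⟩
  rw [hT]
  set F : ℕ → (Fin I → Fin J → Fin K → ℝ) := fun n =>
    if hn : n < R then outer (u ⟨n, hn⟩) (v ⟨n, hn⟩) (w ⟨n, hn⟩) else 0 with hF
  have h1 : ∀ r : Fin R', (outer (if hr : (r:ℕ) < R then u ⟨r, hr⟩ else 0)
      (if hr : (r:ℕ) < R then v ⟨r, hr⟩ else 0)
      (if hr : (r:ℕ) < R then w ⟨r, hr⟩ else 0)) = F r := by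
    intro r
    by_cases hr : (r:ℕ) < R
    · rw [hF]; simp only [dif_pos hr]
    · rw [hF]; simp only [dif_neg hr]
      funext i j k
      simp [outer]
  have h2 : ∀ r : Fin R, outer (u r) (v r) (w r) = F r := by
    intro r
    rw [hF]; simp only [dif_pos r.isLt]
  calc ∑ r : Fin R, outer (u r) (v r) (w r) = ∑ r : Fin R, F r := by
        exact Finset.sum_congr rfl fun r _ => h2 r
    _ = ∑ n ∈ Finset.range R, F n := Fin.sum_univ_eq_sum_range F R
    _ = ∑ n ∈ Finset.range R', F n := by
        apply Finset.sum_subset (Finset.range_subset_range.mpr hRR)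
        intro n _ hn
        rw [Finset.mem_range] at hn
        rw [hF]; simp only [dif_neg hn]
    _ = ∑ r : Fin R', F r := (Fin.sum_univ_eq_sum_range F R').symm
    _ = _ := Finset.sum_congr rfl fun r _ => (h1 r).symm

lemma hasRankLE_total {I J K : ℕ} (T : Fin I → Fin J → Fin K → ℝ) : hasRankLE T (I * J) := by
  classical
  refine ⟨fun p i => if (finProdFinEquiv.symm p).1 = i then 1 else 0,
          fun p j => if (finProdFinEquiv.symm p).2 = j then 1 else 0,
          fun p k => T (finProdFinEquiv.symm p).1 (finProdFinEquiv.symm p).2 k, ?_⟩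
  funext i j k
  simp only [Finset.sum_apply]
  rw [← Equiv.sum_comp (finProdFinEquiv (m := I) (n := J))
    (fun p => outer (fun i => if (finProdFinEquiv.symm p).1 = i then (1:ℝ) else 0)
      (fun j => if (finProdFinEquiv.symm p).2 = j then 1 else 0)
      (fun k => T (finProdFinEquiv.symm p).1 (finProdFinEquiv.symm p).2 k) i j k)]
  simp only [Equiv.symm_apply_apply, outer]
  rw [Fintype.sum_prod_type]
  simp only [ite_mul, one_mul, zero_mul, mul_ite, mul_one, mul_zero]
  simp [Finset.sum_ite_eq, Finset.sum_ite_eq']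

/-- the contraction of a tensor with a covector in modes 2 and 3 -/
def ctr {I J K : ℕ} (T : Fin I → Fin J → Fin K → ℝ) (φ : Fin K → ℝ) (β : Fin J → ℝ) :
    Fin I → ℝ := fun i => ∑ j, ∑ k, T i j k * β j * φ k

lemma ctr_add {I J K : ℕ} (T T' : Fin I → Fin J → Fin K → ℝ) (φ : Fin K → ℝ) (β : Fin J → ℝ) :
    ctr (T + T') φ β = ctr T φ β + ctr T' φ β := by
  funext i
  simp [ctr, add_mul, Finset.sum_add_distrib]

lemma ctr_sub {I J K : ℕ} (T T' : Fin I → Fin J → Fin K → ℝ) (φ : Fin K → ℝ) (β : Fin J → ℝ) :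
    ctr (T - T') φ β = ctr T φ β - ctr T' φ β := by
  funext i
  simp [ctr, sub_mul, Finset.sum_sub_distrib]

lemma ctr_outer {I J K : ℕ} (p : Fin I → ℝ) (q : Fin J → ℝ) (r : Fin K → ℝ)
    (φ : Fin K → ℝ) (β : Fin J → ℝ) :
    ctr (outer p q r) φ β = ((q ⬝ᵥ β) * (r ⬝ᵥ φ)) • p := by
  funext i
  simp only [ctr, outer, Pi.smul_apply, smul_eq_mul, dotProduct,
    Finset.sum_mul, Finset.mul_sum]
  rw [Finset.sum_comm]
  apply Finset.sum_congr rfl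
  intro k _
  apply Finset.sum_congr rfl
  intro j _
  ring

lemma ctr_fsum {I J K R : ℕ} (f : Fin R → (Fin I → Fin J → Fin K → ℝ))
    (φ : Fin K → ℝ) (β : Fin J → ℝ) :
    ctr (∑ r, f r) φ β = ∑ r, ctr (f r) φ β := by
  funext i
  simp only [ctr, Finset.sum_apply, Finset.sum_mul]
  calc ∑ j, ∑ k, ∑ r, f r i j k * β j * φ k
      = ∑ j, ∑ r, ∑ k, f r i j k * β j * φ k :=
        Finset.sum_congr rfl (fun j _ => Finset.sum_comm)
    _ = ∑ r, ∑ j, ∑ k, f r i j k * β j * φ k := Finset.sum_comm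

lemma li_from_span {N p q : ℕ} (F : Fin p → (Fin N → ℝ)) (G : Fin q → (Fin N → ℝ))
    (hFG : ∀ r, F r ∈ Submodule.span ℝ (Set.range G))
    (hGF : ∀ m, ∃ r, G m = F r)
    (hrk : Module.finrank ℝ (Submodule.span ℝ (Set.range F)) = q) :
    LinearIndependent ℝ G := by
  have hspan : Submodule.span ℝ (Set.range F) = Submodule.span ℝ (Set.range G) := by
    apply le_antisymm
    · rw [Submodule.span_le]; rintro _ ⟨r, rfl⟩; exact hFG r
    · rw [Submodule.span_le]; rintro _ ⟨m, rfl⟩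
      obtain ⟨r, hr⟩ := hGF m
      rw [hr]; exact Submodule.subset_span ⟨r, rfl⟩
  rw [linearIndependent_iff_card_eq_finrank_span, Fintype.card_fin]
  show q = Module.finrank ℝ (Submodule.span ℝ (Set.range G))
  rw [← hspan, hrk]

theorem stmt13 (I J K : ℕ) (hI : 6 ≤ I) (hJ : 6 ≤ J) (hK : 5 ≤ K)
    (a : Fin 2 → Fin I → ℝ) (b : Fin 2 → Fin J → ℝ) (c : Fin K → ℝ)
    (hc : c ≠ 0)
    (hlia : LinearIndependent ℝ ![a 0, a 1])
    (hlib : LinearIndependent ℝ ![b 0, b 1])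
    (Q : Matrix (Fin 2) (Fin 2) ℝ) (hQ : IsUnit Q.det)
    (ta : Fin 2 → Fin I → ℝ) (tb : Fin 2 → Fin J → ℝ)
    (hta : ∀ r i, ta r i = ∑ s, a s i * Q s r)
    (htb : ∀ r j, tb r j = ∑ s, b s j * Q⁻¹ r s)
    (x : Fin 4 → Fin I → ℝ) (y : Fin 4 → Fin J → ℝ) (z : Fin 4 → Fin K → ℝ)
    (hrk1 : (Matrix.of fun i (r : Fin 8) =>
        Fin.append (Fin.append (fun s : Fin 2 => a s i) (fun s : Fin 2 => ta s i))
          (fun s : Fin 4 => x s i) r).rank = 6)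
    (hrk2 : (Matrix.of fun j (r : Fin 8) =>
        Fin.append (Fin.append (fun s : Fin 2 => b s j) (fun s : Fin 2 => tb s j))
          (fun s : Fin 4 => y s j) r).rank = 6)
    (hrk3 : (Matrix.of fun k (r : Fin 5) =>
        Fin.append (fun _ : Fin 1 => c k) (fun s : Fin 4 => z s k) r).rank = 5) :
    6 ≤ tensorRank
      (outer (a 0) (b 0) (z 0) + outer (a 0) (y 0) c + outer (x 0) (b 0) c +
       outer (a 1) (b 1) (z 1) + outer (a 1) (y 1) c + outer (x 1) (b 1) c -
       outer (ta 0) (tb 0) (z 2) - outer (ta 0) (y 2) c - outer (x 2) (tb 0) c -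
       outer (ta 1) (tb 1) (z 3) - outer (ta 1) (y 3) c - outer (x 3) (tb 1) c) := by
  classical
  set Tt : Fin I → Fin J → Fin K → ℝ :=
      (outer (a 0) (b 0) (z 0) + outer (a 0) (y 0) c + outer (x 0) (b 0) c +
       outer (a 1) (b 1) (z 1) + outer (a 1) (y 1) c + outer (x 1) (b 1) c -
       outer (ta 0) (tb 0) (z 2) - outer (ta 0) (y 2) c - outer (x 2) (tb 0) c -
       outer (ta 1) (tb 1) (z 3) - outer (ta 1) (y 3) c - outer (x 3) (tb 1) c) with hTtdef
  -- basic independence facts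
  have hA : LinearIndependent ℝ ![a 0, a 1, x 0, x 1, x 2, x 3] := by
    apply li_from_span (Matrix.of fun i (r : Fin 8) =>
        Fin.append (Fin.append (fun s : Fin 2 => a s i) (fun s : Fin 2 => ta s i))
          (fun s : Fin 4 => x s i) r)ᵀ
    · intro r
      fin_cases r
      · exact Submodule.subset_span ⟨0, rfl⟩
      · exact Submodule.subset_span ⟨1, rfl⟩
      · have : ta 0 = Q 0 0 • a 0 + Q 1 0 • a 1 := by
          funext i; rw [hta 0 i, Fin.sum_univ_two]; simp [mul_comm]
        show ta 0 ∈ _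
        rw [this]
        exact Submodule.add_mem _
          (Submodule.smul_mem _ _ (Submodule.subset_span ⟨0, rfl⟩))
          (Submodule.smul_mem _ _ (Submodule.subset_span ⟨1, rfl⟩))
      · have : ta 1 = Q 0 1 • a 0 + Q 1 1 • a 1 := by
          funext i; rw [hta 1 i, Fin.sum_univ_two]; simp [mul_comm]
        show ta 1 ∈ _
        rw [this]
        exact Submodule.add_mem _
          (Submodule.smul_mem _ _ (Submodule.subset_span ⟨0, rfl⟩))
          (Submodule.smul_mem _ _ (Submodule.subset_span ⟨1, rfl⟩))
      · exact Submodule.subset_span ⟨2, rfl⟩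
      · exact Submodule.subset_span ⟨3, rfl⟩
      · exact Submodule.subset_span ⟨4, rfl⟩
      · exact Submodule.subset_span ⟨5, rfl⟩
    · intro m
      fin_cases m
      · exact ⟨0, rfl⟩
      · exact ⟨1, rfl⟩
      · exact ⟨4, rfl⟩
      · exact ⟨5, rfl⟩
      · exact ⟨6, rfl⟩
      · exact ⟨7, rfl⟩
    · rw [Matrix.rank_eq_finrank_span_cols] at hrk1
      exact hrk1
  have hB : LinearIndependent ℝ ![b 0, b 1, y 0, y 1, y 2, y 3] := by
    apply li_from_span (Matrix.of fun j (r : Fin 8) =>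
        Fin.append (Fin.append (fun s : Fin 2 => b s j) (fun s : Fin 2 => tb s j))
          (fun s : Fin 4 => y s j) r)ᵀ
    · intro r
      fin_cases r
      · exact Submodule.subset_span ⟨0, rfl⟩
      · exact Submodule.subset_span ⟨1, rfl⟩
      · have : tb 0 = Q⁻¹ 0 0 • b 0 + Q⁻¹ 0 1 • b 1 := by
          funext j; rw [htb 0 j, Fin.sum_univ_two]; simp [mul_comm]
        show tb 0 ∈ _
        rw [this]
        exact Submodule.add_mem _
          (Submodule.smul_mem _ _ (Submodule.subset_span ⟨0, rfl⟩))
          (Submodule.smul_mem _ _ (Submodule.subset_span ⟨1, rfl⟩))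
      · have : tb 1 = Q⁻¹ 1 0 • b 0 + Q⁻¹ 1 1 • b 1 := by
          funext j; rw [htb 1 j, Fin.sum_univ_two]; simp [mul_comm]
        show tb 1 ∈ _
        rw [this]
        exact Submodule.add_mem _
          (Submodule.smul_mem _ _ (Submodule.subset_span ⟨0, rfl⟩))
          (Submodule.smul_mem _ _ (Submodule.subset_span ⟨1, rfl⟩))
      · exact Submodule.subset_span ⟨2, rfl⟩
      · exact Submodule.subset_span ⟨3, rfl⟩
      · exact Submodule.subset_span ⟨4, rfl⟩
      · exact Submodule.subset_span ⟨5, rfl⟩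
    · intro m
      fin_cases m
      · exact ⟨0, rfl⟩
      · exact ⟨1, rfl⟩
      · exact ⟨4, rfl⟩
      · exact ⟨5, rfl⟩
      · exact ⟨6, rfl⟩
      · exact ⟨7, rfl⟩
    · rw [Matrix.rank_eq_finrank_span_cols] at hrk2
      exact hrk2
  have hC : LinearIndependent ℝ ![c, z 0, z 1, z 2, z 3] := by
    apply li_from_span (Matrix.of fun k (r : Fin 5) =>
        Fin.append (fun _ : Fin 1 => c k) (fun s : Fin 4 => z s k) r)ᵀ
    · intro r
      fin_cases r
      · exact Submodule.subset_span ⟨0, rfl⟩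
      · exact Submodule.subset_span ⟨1, rfl⟩
      · exact Submodule.subset_span ⟨2, rfl⟩
      · exact Submodule.subset_span ⟨3, rfl⟩
      · exact Submodule.subset_span ⟨4, rfl⟩
    · intro m
      fin_cases m
      · exact ⟨0, rfl⟩
      · exact ⟨1, rfl⟩
      · exact ⟨2, rfl⟩
      · exact ⟨3, rfl⟩
      · exact ⟨4, rfl⟩
    · rw [Matrix.rank_eq_finrank_span_cols] at hrk3
      exact hrk3
  obtain ⟨ξa0, hξa0⟩ := exists_dual _ hA ![(1:ℝ),0,0,0,0,0]
  have hv_ξa0_a0 : (a 0) ⬝ᵥ ξa0 = 1 := by simpa using hξa0 0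
  have hv_ξa0_a1 : (a 1) ⬝ᵥ ξa0 = 0 := by simpa using hξa0 1
  have hv_ξa0_x0 : (x 0) ⬝ᵥ ξa0 = 0 := by simpa using hξa0 2
  have hv_ξa0_x1 : (x 1) ⬝ᵥ ξa0 = 0 := by simpa using hξa0 3
  have hv_ξa0_x2 : (x 2) ⬝ᵥ ξa0 = 0 := by simpa using hξa0 4
  have hv_ξa0_x3 : (x 3) ⬝ᵥ ξa0 = 0 := by simpa using hξa0 5
  obtain ⟨ξa1, hξa1⟩ := exists_dual _ hA ![(0:ℝ),1,0,0,0,0]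
  have hv_ξa1_a0 : (a 0) ⬝ᵥ ξa1 = 0 := by simpa using hξa1 0
  have hv_ξa1_a1 : (a 1) ⬝ᵥ ξa1 = 1 := by simpa using hξa1 1
  have hv_ξa1_x0 : (x 0) ⬝ᵥ ξa1 = 0 := by simpa using hξa1 2
  have hv_ξa1_x1 : (x 1) ⬝ᵥ ξa1 = 0 := by simpa using hξa1 3
  have hv_ξa1_x2 : (x 2) ⬝ᵥ ξa1 = 0 := by simpa using hξa1 4
  have hv_ξa1_x3 : (x 3) ⬝ᵥ ξa1 = 0 := by simpa using hξa1 5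
  obtain ⟨ξx0, hξx0⟩ := exists_dual _ hA ![(0:ℝ),0,1,0,0,0]
  have hv_ξx0_a0 : (a 0) ⬝ᵥ ξx0 = 0 := by simpa using hξx0 0
  have hv_ξx0_a1 : (a 1) ⬝ᵥ ξx0 = 0 := by simpa using hξx0 1
  have hv_ξx0_x0 : (x 0) ⬝ᵥ ξx0 = 1 := by simpa using hξx0 2
  have hv_ξx0_x1 : (x 1) ⬝ᵥ ξx0 = 0 := by simpa using hξx0 3
  have hv_ξx0_x2 : (x 2) ⬝ᵥ ξx0 = 0 := by simpa using hξx0 4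
  have hv_ξx0_x3 : (x 3) ⬝ᵥ ξx0 = 0 := by simpa using hξx0 5
  obtain ⟨ξx1, hξx1⟩ := exists_dual _ hA ![(0:ℝ),0,0,1,0,0]
  have hv_ξx1_a0 : (a 0) ⬝ᵥ ξx1 = 0 := by simpa using hξx1 0
  have hv_ξx1_a1 : (a 1) ⬝ᵥ ξx1 = 0 := by simpa using hξx1 1
  have hv_ξx1_x0 : (x 0) ⬝ᵥ ξx1 = 0 := by simpa using hξx1 2
  have hv_ξx1_x1 : (x 1) ⬝ᵥ ξx1 = 1 := by simpa using hξx1 3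
  have hv_ξx1_x2 : (x 2) ⬝ᵥ ξx1 = 0 := by simpa using hξx1 4
  have hv_ξx1_x3 : (x 3) ⬝ᵥ ξx1 = 0 := by simpa using hξx1 5
  obtain ⟨β0, hβ0⟩ := exists_dual _ hB ![(1:ℝ),0,0,0,0,0]
  have hv_β0_b0 : (b 0) ⬝ᵥ β0 = 1 := by simpa using hβ0 0
  have hv_β0_b1 : (b 1) ⬝ᵥ β0 = 0 := by simpa using hβ0 1
  have hv_β0_y0 : (y 0) ⬝ᵥ β0 = 0 := by simpa using hβ0 2
  have hv_β0_y1 : (y 1) ⬝ᵥ β0 = 0 := by simpa using hβ0 3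
  have hv_β0_y2 : (y 2) ⬝ᵥ β0 = 0 := by simpa using hβ0 4
  have hv_β0_y3 : (y 3) ⬝ᵥ β0 = 0 := by simpa using hβ0 5
  obtain ⟨β1, hβ1⟩ := exists_dual _ hB ![(0:ℝ),1,0,0,0,0]
  have hv_β1_b0 : (b 0) ⬝ᵥ β1 = 0 := by simpa using hβ1 0
  have hv_β1_b1 : (b 1) ⬝ᵥ β1 = 1 := by simpa using hβ1 1
  have hv_β1_y0 : (y 0) ⬝ᵥ β1 = 0 := by simpa using hβ1 2
  have hv_β1_y1 : (y 1) ⬝ᵥ β1 = 0 := by simpa using hβ1 3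
  have hv_β1_y2 : (y 2) ⬝ᵥ β1 = 0 := by simpa using hβ1 4
  have hv_β1_y3 : (y 3) ⬝ᵥ β1 = 0 := by simpa using hβ1 5
  obtain ⟨η0, hη0⟩ := exists_dual _ hB ![(0:ℝ),0,1,0,0,0]
  have hv_η0_b0 : (b 0) ⬝ᵥ η0 = 0 := by simpa using hη0 0
  have hv_η0_b1 : (b 1) ⬝ᵥ η0 = 0 := by simpa using hη0 1
  have hv_η0_y0 : (y 0) ⬝ᵥ η0 = 1 := by simpa using hη0 2
  have hv_η0_y1 : (y 1) ⬝ᵥ η0 = 0 := by simpa using hη0 3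
  have hv_η0_y2 : (y 2) ⬝ᵥ η0 = 0 := by simpa using hη0 4
  have hv_η0_y3 : (y 3) ⬝ᵥ η0 = 0 := by simpa using hη0 5
  obtain ⟨η1, hη1⟩ := exists_dual _ hB ![(0:ℝ),0,0,1,0,0]
  have hv_η1_b0 : (b 0) ⬝ᵥ η1 = 0 := by simpa using hη1 0
  have hv_η1_b1 : (b 1) ⬝ᵥ η1 = 0 := by simpa using hη1 1
  have hv_η1_y0 : (y 0) ⬝ᵥ η1 = 0 := by simpa using hη1 2
  have hv_η1_y1 : (y 1) ⬝ᵥ η1 = 1 := by simpa using hη1 3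
  have hv_η1_y2 : (y 2) ⬝ᵥ η1 = 0 := by simpa using hη1 4
  have hv_η1_y3 : (y 3) ⬝ᵥ η1 = 0 := by simpa using hη1 5
  obtain ⟨ζ0, hζ0⟩ := exists_dual _ hC ![(0:ℝ),1,0,0,0]
  have hv_ζ0_c : (c) ⬝ᵥ ζ0 = 0 := by simpa using hζ0 0
  have hv_ζ0_z0 : (z 0) ⬝ᵥ ζ0 = 1 := by simpa using hζ0 1
  have hv_ζ0_z1 : (z 1) ⬝ᵥ ζ0 = 0 := by simpa using hζ0 2
  have hv_ζ0_z2 : (z 2) ⬝ᵥ ζ0 = 0 := by simpa using hζ0 3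
  have hv_ζ0_z3 : (z 3) ⬝ᵥ ζ0 = 0 := by simpa using hζ0 4
  obtain ⟨ζ1, hζ1⟩ := exists_dual _ hC ![(0:ℝ),0,1,0,0]
  have hv_ζ1_c : (c) ⬝ᵥ ζ1 = 0 := by simpa using hζ1 0
  have hv_ζ1_z0 : (z 0) ⬝ᵥ ζ1 = 0 := by simpa using hζ1 1
  have hv_ζ1_z1 : (z 1) ⬝ᵥ ζ1 = 1 := by simpa using hζ1 2
  have hv_ζ1_z2 : (z 2) ⬝ᵥ ζ1 = 0 := by simpa using hζ1 3
  have hv_ζ1_z3 : (z 3) ⬝ᵥ ζ1 = 0 := by simpa using hζ1 4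
  have ha0 : a 0 ≠ 0 := by simpa using hlia.ne_zero 0
  have ha1 : a 1 ≠ 0 := by simpa using hlia.ne_zero 1
  have htadot : ∀ (r : Fin 2) (ξ : Fin I → ℝ),
      ta r ⬝ᵥ ξ = Q 0 r * (a 0 ⬝ᵥ ξ) + Q 1 r * (a 1 ⬝ᵥ ξ) := by
    intro r ξ
    simp only [dotProduct, Finset.mul_sum, ← Finset.sum_add_distrib]
    apply Finset.sum_congr rfl
    intro i _
    rw [hta r i, Fin.sum_univ_two]
    ring
  have htbdot : ∀ (r : Fin 2) (β : Fin J → ℝ),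
      tb r ⬝ᵥ β = Q⁻¹ r 0 * (b 0 ⬝ᵥ β) + Q⁻¹ r 1 * (b 1 ⬝ᵥ β) := by
    intro r β
    simp only [dotProduct, Finset.mul_sum, ← Finset.sum_add_distrib]
    apply Finset.sum_congr rfl
    intro j _
    rw [htb r j, Fin.sum_univ_two]
    ring
  have hFor : ∀ (φ : Fin K → ℝ) (β : Fin J → ℝ), ctr Tt φ β =
      ((b 0 ⬝ᵥ β) * (z 0 ⬝ᵥ φ)) • a 0 + ((y 0 ⬝ᵥ β) * (c ⬝ᵥ φ)) • a 0
        + ((b 0 ⬝ᵥ β) * (c ⬝ᵥ φ)) • x 0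
      + ((b 1 ⬝ᵥ β) * (z 1 ⬝ᵥ φ)) • a 1 + ((y 1 ⬝ᵥ β) * (c ⬝ᵥ φ)) • a 1
        + ((b 1 ⬝ᵥ β) * (c ⬝ᵥ φ)) • x 1
      - ((tb 0 ⬝ᵥ β) * (z 2 ⬝ᵥ φ)) • ta 0 - ((y 2 ⬝ᵥ β) * (c ⬝ᵥ φ)) • ta 0
        - ((tb 0 ⬝ᵥ β) * (c ⬝ᵥ φ)) • x 2
      - ((tb 1 ⬝ᵥ β) * (z 3 ⬝ᵥ φ)) • ta 1 - ((y 3 ⬝ᵥ β) * (c ⬝ᵥ φ)) • ta 1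
        - ((tb 1 ⬝ᵥ β) * (c ⬝ᵥ φ)) • x 3 := by
    intro φ β
    rw [hTtdef]
    simp only [ctr_add, ctr_sub, ctr_outer]
  have hkey : ¬ hasRankLE Tt 5 := by
    rintro ⟨u, v, w, hT⟩
    have hD : ∀ (φ : Fin K → ℝ) (β : Fin J → ℝ),
        ctr Tt φ β = ∑ t, ((v t ⬝ᵥ β) * (w t ⬝ᵥ φ)) • u t := by
      intro φ β
      rw [hT, ctr_fsum]
      simp only [ctr_outer]
    -- Step 1: for every pair r ≠ s, c lies in the span of w r, w s.
    have pair : ∀ r s : Fin 5, r ≠ s → ∃ α γ : ℝ, c = α • w r + γ • w s := by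
      intro r s hrs
      have hsep : ∀ φ : Fin K → ℝ, (∀ i, ![w r, w s] i ⬝ᵥ φ = 0) → c ⬝ᵥ φ = 0 := by
        intro φ hφ
        by_contra hδ
        have hwr : w r ⬝ᵥ φ = 0 := hφ 0
        have hws : w s ⬝ᵥ φ = 0 := hφ 1
        have hpair : ∀ (β : Fin J → ℝ) (ξ : Fin I → ℝ), (ctr Tt φ β) ⬝ᵥ ξ =
            (b 0 ⬝ᵥ β) * (z 0 ⬝ᵥ φ) * (a 0 ⬝ᵥ ξ) + (y 0 ⬝ᵥ β) * (c ⬝ᵥ φ) * (a 0 ⬝ᵥ ξ)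
              + (b 0 ⬝ᵥ β) * (c ⬝ᵥ φ) * (x 0 ⬝ᵥ ξ)
            + (b 1 ⬝ᵥ β) * (z 1 ⬝ᵥ φ) * (a 1 ⬝ᵥ ξ) + (y 1 ⬝ᵥ β) * (c ⬝ᵥ φ) * (a 1 ⬝ᵥ ξ)
              + (b 1 ⬝ᵥ β) * (c ⬝ᵥ φ) * (x 1 ⬝ᵥ ξ)
            - (tb 0 ⬝ᵥ β) * (z 2 ⬝ᵥ φ) * (ta 0 ⬝ᵥ ξ) - (y 2 ⬝ᵥ β) * (c ⬝ᵥ φ) * (ta 0 ⬝ᵥ ξ)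
              - (tb 0 ⬝ᵥ β) * (c ⬝ᵥ φ) * (x 2 ⬝ᵥ ξ)
            - (tb 1 ⬝ᵥ β) * (z 3 ⬝ᵥ φ) * (ta 1 ⬝ᵥ ξ) - (y 3 ⬝ᵥ β) * (c ⬝ᵥ φ) * (ta 1 ⬝ᵥ ξ)
              - (tb 1 ⬝ᵥ β) * (c ⬝ᵥ φ) * (x 3 ⬝ᵥ ξ) := by
          intro β ξ
          rw [hFor]
          simp only [add_dotProduct, sub_dotProduct, smul_dotProduct, smul_eq_mul]
        set mm : Fin 4 → Fin I → ℝ := fun i => ctr Tt φ (![β0, β1, η0, η1] i) with hmm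
        have hp_0_ξx0 : mm 0 ⬝ᵥ ξx0 = c ⬝ᵥ φ := by
          show ctr Tt φ β0 ⬝ᵥ ξx0 = _
          rw [hpair]
          simp only [htadot, htbdot, hv_β0_b0, hv_β0_b1, hv_β0_y0, hv_β0_y1, hv_β0_y2, hv_β0_y3, hv_ξx0_a0, hv_ξx0_a1, hv_ξx0_x0, hv_ξx0_x1, hv_ξx0_x2, hv_ξx0_x3]
          ring
        have hp_1_ξx0 : mm 1 ⬝ᵥ ξx0 = 0 := by
          show ctr Tt φ β1 ⬝ᵥ ξx0 = _
          rw [hpair]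
          simp only [htadot, htbdot, hv_β1_b0, hv_β1_b1, hv_β1_y0, hv_β1_y1, hv_β1_y2, hv_β1_y3, hv_ξx0_a0, hv_ξx0_a1, hv_ξx0_x0, hv_ξx0_x1, hv_ξx0_x2, hv_ξx0_x3]
          ring
        have hp_2_ξx0 : mm 2 ⬝ᵥ ξx0 = 0 := by
          show ctr Tt φ η0 ⬝ᵥ ξx0 = _
          rw [hpair]
          simp only [htadot, htbdot, hv_η0_b0, hv_η0_b1, hv_η0_y0, hv_η0_y1, hv_η0_y2, hv_η0_y3, hv_ξx0_a0, hv_ξx0_a1, hv_ξx0_x0, hv_ξx0_x1, hv_ξx0_x2, hv_ξx0_x3]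
          ring
        have hp_3_ξx0 : mm 3 ⬝ᵥ ξx0 = 0 := by
          show ctr Tt φ η1 ⬝ᵥ ξx0 = _
          rw [hpair]
          simp only [htadot, htbdot, hv_η1_b0, hv_η1_b1, hv_η1_y0, hv_η1_y1, hv_η1_y2, hv_η1_y3, hv_ξx0_a0, hv_ξx0_a1, hv_ξx0_x0, hv_ξx0_x1, hv_ξx0_x2, hv_ξx0_x3]
          ring
        have hp_0_ξx1 : mm 0 ⬝ᵥ ξx1 = 0 := by
          show ctr Tt φ β0 ⬝ᵥ ξx1 = _
          rw [hpair]
          simp only [htadot, htbdot, hv_β0_b0, hv_β0_b1, hv_β0_y0, hv_β0_y1, hv_β0_y2, hv_β0_y3, hv_ξx1_a0, hv_ξx1_a1, hv_ξx1_x0, hv_ξx1_x1, hv_ξx1_x2, hv_ξx1_x3]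
          ring
        have hp_1_ξx1 : mm 1 ⬝ᵥ ξx1 = c ⬝ᵥ φ := by
          show ctr Tt φ β1 ⬝ᵥ ξx1 = _
          rw [hpair]
          simp only [htadot, htbdot, hv_β1_b0, hv_β1_b1, hv_β1_y0, hv_β1_y1, hv_β1_y2, hv_β1_y3, hv_ξx1_a0, hv_ξx1_a1, hv_ξx1_x0, hv_ξx1_x1, hv_ξx1_x2, hv_ξx1_x3]
          ring
        have hp_2_ξx1 : mm 2 ⬝ᵥ ξx1 = 0 := by
          show ctr Tt φ η0 ⬝ᵥ ξx1 = _
          rw [hpair]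
          simp only [htadot, htbdot, hv_η0_b0, hv_η0_b1, hv_η0_y0, hv_η0_y1, hv_η0_y2, hv_η0_y3, hv_ξx1_a0, hv_ξx1_a1, hv_ξx1_x0, hv_ξx1_x1, hv_ξx1_x2, hv_ξx1_x3]
          ring
        have hp_3_ξx1 : mm 3 ⬝ᵥ ξx1 = 0 := by
          show ctr Tt φ η1 ⬝ᵥ ξx1 = _
          rw [hpair]
          simp only [htadot, htbdot, hv_η1_b0, hv_η1_b1, hv_η1_y0, hv_η1_y1, hv_η1_y2, hv_η1_y3, hv_ξx1_a0, hv_ξx1_a1, hv_ξx1_x0, hv_ξx1_x1, hv_ξx1_x2, hv_ξx1_x3]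
          ring
        have hp_2_ξa0 : mm 2 ⬝ᵥ ξa0 = c ⬝ᵥ φ := by
          show ctr Tt φ η0 ⬝ᵥ ξa0 = _
          rw [hpair]
          simp only [htadot, htbdot, hv_η0_b0, hv_η0_b1, hv_η0_y0, hv_η0_y1, hv_η0_y2, hv_η0_y3, hv_ξa0_a0, hv_ξa0_a1, hv_ξa0_x0, hv_ξa0_x1, hv_ξa0_x2, hv_ξa0_x3]
          ring
        have hp_3_ξa0 : mm 3 ⬝ᵥ ξa0 = 0 := by
          show ctr Tt φ η1 ⬝ᵥ ξa0 = _
          rw [hpair]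
          simp only [htadot, htbdot, hv_η1_b0, hv_η1_b1, hv_η1_y0, hv_η1_y1, hv_η1_y2, hv_η1_y3, hv_ξa0_a0, hv_ξa0_a1, hv_ξa0_x0, hv_ξa0_x1, hv_ξa0_x2, hv_ξa0_x3]
          ring
        have hp_2_ξa1 : mm 2 ⬝ᵥ ξa1 = 0 := by
          show ctr Tt φ η0 ⬝ᵥ ξa1 = _
          rw [hpair]
          simp only [htadot, htbdot, hv_η0_b0, hv_η0_b1, hv_η0_y0, hv_η0_y1, hv_η0_y2, hv_η0_y3, hv_ξa1_a0, hv_ξa1_a1, hv_ξa1_x0, hv_ξa1_x1, hv_ξa1_x2, hv_ξa1_x3]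
          ring
        have hp_3_ξa1 : mm 3 ⬝ᵥ ξa1 = c ⬝ᵥ φ := by
          show ctr Tt φ η1 ⬝ᵥ ξa1 = _
          rw [hpair]
          simp only [htadot, htbdot, hv_η1_b0, hv_η1_b1, hv_η1_y0, hv_η1_y1, hv_η1_y2, hv_η1_y3, hv_ξa1_a0, hv_ξa1_a1, hv_ξa1_x0, hv_ξa1_x1, hv_ξa1_x2, hv_ξa1_x3]
          ring
        have hli4 : LinearIndependent ℝ mm := by
          rw [Fintype.linearIndependent_iff]
          intro g hg
          have hdot : ∀ ξ : Fin I → ℝ,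
              g 0 * (mm 0 ⬝ᵥ ξ) + g 1 * (mm 1 ⬝ᵥ ξ) + g 2 * (mm 2 ⬝ᵥ ξ) + g 3 * (mm 3 ⬝ᵥ ξ)
                = 0 := by
            intro ξ
            have h0 := congrArg (fun t => t ⬝ᵥ ξ) hg
            simp only [Fin.sum_univ_four, add_dotProduct, smul_dotProduct, smul_eq_mul,
              zero_dotProduct] at h0
            linarith [h0]
          have hg0 : g 0 = 0 := by
            have h0 := hdot ξx0
            rw [hp_0_ξx0, hp_1_ξx0, hp_2_ξx0, hp_3_ξx0] at h0
            simp only [mul_zero, add_zero] at h0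
            rcases mul_eq_zero.mp h0 with h | h
            · exact h
            · exact absurd h hδ
          have hg1 : g 1 = 0 := by
            have h0 := hdot ξx1
            rw [hp_0_ξx1, hp_1_ξx1, hp_2_ξx1, hp_3_ξx1] at h0
            simp only [mul_zero, add_zero, zero_add] at h0
            rcases mul_eq_zero.mp h0 with h | h
            · exact h
            · exact absurd h hδ
          have hg2 : g 2 = 0 := by
            have h0 := hdot ξa0
            rw [hp_2_ξa0, hp_3_ξa0, hg0, hg1] at h0
            simp only [mul_zero, add_zero, zero_mul, zero_add] at h0
            rcases mul_eq_zero.mp h0 with h | h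
            · exact h
            · exact absurd h hδ
          have hg3 : g 3 = 0 := by
            have h0 := hdot ξa1
            rw [hp_2_ξa1, hp_3_ξa1, hg0, hg1, hg2] at h0
            simp only [mul_zero, add_zero, zero_mul, zero_add] at h0
            rcases mul_eq_zero.mp h0 with h | h
            · exact h
            · exact absurd h hδ
          intro i
          fin_cases i <;> assumption
        set SS : Submodule ℝ (Fin I → ℝ) :=
          Submodule.span ℝ (↑(((Finset.univ.erase r).erase s).image u)) with hSS
        have hmemβ : ∀ β, ctr Tt φ β ∈ SS := by
          intro β
          rw [hD φ β]
          apply Submodule.sum_mem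
          intro t _
          by_cases h1 : t = r
          · rw [h1, hwr, mul_zero, zero_smul]
            exact SS.zero_mem
          by_cases h2 : t = s
          · rw [h2, hws, mul_zero, zero_smul]
            exact SS.zero_mem
          · refine Submodule.smul_mem _ _ (Submodule.subset_span ?_)
            exact Finset.mem_coe.mpr (Finset.mem_image_of_mem u
              (Finset.mem_erase.mpr ⟨h2, Finset.mem_erase.mpr ⟨h1, Finset.mem_univ t⟩⟩))
        have hle1 : Submodule.span ℝ (Set.range mm) ≤ SS := by
          rw [Submodule.span_le]
          rintro _ ⟨i, rfl⟩
          exact hmemβ _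
        have h4 : Module.finrank ℝ (Submodule.span ℝ (Set.range mm)) = 4 := by
          rw [finrank_span_eq_card hli4, Fintype.card_fin]
        have h3 : Module.finrank ℝ SS ≤ 3 := by
          have hcard : (((Finset.univ.erase r).erase s).image u).card ≤ 3 := by
            calc (((Finset.univ.erase r).erase s).image u).card
                ≤ ((Finset.univ.erase r).erase s).card := Finset.card_image_le
              _ = 3 := by
                  rw [Finset.card_erase_of_mem
                    (Finset.mem_erase.mpr ⟨Ne.symm hrs, Finset.mem_univ s⟩),
                    Finset.card_erase_of_mem (Finset.mem_univ r)]
                  simp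
          have := finrank_span_finset_le_card (R := ℝ) (((Finset.univ.erase r).erase s).image u)
          rw [Set.finrank] at this
          exact le_trans this hcard
        have hmono := Submodule.finrank_mono hle1
        rw [h4] at hmono
        omega
      obtain ⟨t2, ht2⟩ := sep' ![w r, w s] c hsep
      refine ⟨t2 0, t2 1, ?_⟩
      rw [ht2]
      simp [Fin.sum_univ_two]
    -- Step 2: all the w t lie in a plane containing c.
    have hwbar : ∃ wbar : Fin K → ℝ, ∀ t : Fin 5, ∃ st tt : ℝ, w t = st • c + tt • wbar := by
      by_cases hcase : ∀ r : Fin 5, ∃ lam : ℝ, c = lam • w r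
      · refine ⟨0, fun t => ?_⟩
        obtain ⟨lam, hlam⟩ := hcase t
        have hlam0 : lam ≠ 0 := by
          rintro rfl
          rw [zero_smul] at hlam
          exact hc hlam
        refine ⟨lam⁻¹, 0, ?_⟩
        rw [hlam, smul_smul, inv_mul_cancel₀ hlam0, one_smul]
        simp
      · push_neg at hcase
        obtain ⟨r0, hr0⟩ := hcase
        refine ⟨w r0, fun t => ?_⟩
        by_cases ht : t = r0
        · exact ⟨0, 1, by rw [ht]; simp⟩
        · obtain ⟨α, γ, hαγ⟩ := pair r0 t (fun hh => ht hh.symm)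
          have hγ : γ ≠ 0 := by
            rintro rfl
            rw [zero_smul, add_zero] at hαγ
            exact hr0 α hαγ
          refine ⟨γ⁻¹, -(γ⁻¹ * α), ?_⟩
          have hsub : γ • w t = c - α • w r0 := by
            rw [hαγ]
            abel
          calc w t = γ⁻¹ • (γ • w t) := by rw [smul_smul, inv_mul_cancel₀ hγ, one_smul]
            _ = γ⁻¹ • (c - α • w r0) := by rw [hsub]
            _ = γ⁻¹ • c + (-(γ⁻¹ * α)) • w r0 := by
                rw [smul_sub, smul_smul, neg_smul, sub_eq_add_neg]
    obtain ⟨wbar, hwbar⟩ := hwbar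
    choose σ τ hw using hwbar
    have hwdot : ∀ (t : Fin 5) (ζ : Fin K → ℝ),
        w t ⬝ᵥ ζ = σ t * (c ⬝ᵥ ζ) + τ t * (wbar ⬝ᵥ ζ) := by
      intro t ζ
      rw [hw t, add_dotProduct, smul_dotProduct, smul_dotProduct]
      simp [smul_eq_mul]
    set Gm : (Fin J → ℝ) → (Fin I → ℝ) := fun β => ∑ t, ((v t ⬝ᵥ β) * τ t) • u t with hGm
    have E0 : ∀ β, (b 0 ⬝ᵥ β) • a 0 = (wbar ⬝ᵥ ζ0) • Gm β := by
      intro β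
      have h1 := hFor ζ0 β
      rw [hv_ζ0_c, hv_ζ0_z0, hv_ζ0_z1, hv_ζ0_z2, hv_ζ0_z3] at h1
      simp only [mul_zero, mul_one, zero_smul, add_zero, sub_zero, zero_add] at h1
      have h2 := hD ζ0 β
      have h3 : (b 0 ⬝ᵥ β) • a 0 = ∑ t, ((v t ⬝ᵥ β) * (w t ⬝ᵥ ζ0)) • u t := h1.symm.trans h2
      rw [h3, hGm, Finset.smul_sum]
      apply Finset.sum_congr rfl
      intro t _
      rw [smul_smul, hwdot t ζ0, hv_ζ0_c]
      congr 1
      ring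
    have E1 : ∀ β, (b 1 ⬝ᵥ β) • a 1 = (wbar ⬝ᵥ ζ1) • Gm β := by
      intro β
      have h1 := hFor ζ1 β
      rw [hv_ζ1_c, hv_ζ1_z0, hv_ζ1_z1, hv_ζ1_z2, hv_ζ1_z3] at h1
      simp only [mul_zero, mul_one, zero_smul, add_zero, sub_zero, zero_add] at h1
      have h2 := hD ζ1 β
      have h3 : (b 1 ⬝ᵥ β) • a 1 = ∑ t, ((v t ⬝ᵥ β) * (w t ⬝ᵥ ζ1)) • u t := h1.symm.trans h2
      rw [h3, hGm, Finset.smul_sum]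
      apply Finset.sum_congr rfl
      intro t _
      rw [smul_smul, hwdot t ζ1, hv_ζ1_c]
      congr 1
      ring
    have e00 : a 0 = (wbar ⬝ᵥ ζ0) • Gm β0 := by
      have h0 := E0 β0
      rwa [hv_β0_b0, one_smul] at h0
    have e10 : (0 : Fin I → ℝ) = (wbar ⬝ᵥ ζ1) • Gm β0 := by
      have h0 := E1 β0
      rwa [hv_β0_b1, zero_smul] at h0
    have e11 : a 1 = (wbar ⬝ᵥ ζ1) • Gm β1 := by
      have h0 := E1 β1
      rwa [hv_β1_b1, one_smul] at h0
    have hGβ0 : Gm β0 ≠ 0 := by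
      intro h0
      rw [h0, smul_zero] at e00
      exact ha0 e00
    have hμ1 : (wbar ⬝ᵥ ζ1) = 0 := by
      rcases smul_eq_zero.mp e10.symm with h0 | h0
      · exact h0
      · exact absurd h0 hGβ0
    rw [hμ1, zero_smul] at e11
    exact ha1 e11
  -- conclude
  by_contra hcon
  push_neg at hcon
  have hle : tensorRank Tt ≤ 5 := by omega
  have hne : (I * J) ∈ {R | hasRankLE Tt R} := hasRankLE_total Tt
  have hmem : tensorRank Tt ∈ {R | hasRankLE Tt R} := Nat.sInf_mem ⟨I * J, hne⟩
  have hmem' : hasRankLE Tt (tensorRank Tt) := hmem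
  exact hkey (hasRankLE_mono hmem' hle)
end
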